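/- Let Ω ⊆ ℝ^n be a convex set, let Q ∈ ℝ^{n×n} be a positive definite matrix, let r : ℝ^n → ℝ be differentiable and 1-strongly convex on Ω with respect to ‖·‖_Q, let x_t ∈ Ω and g_t, g̃_t ∈ ℝ^n, let x̂_t be a minimizer over Ω of x ↦ ⟨g̃_t, x⟩ + B_r(x, x_t), and let x_{t+1} be a minimizer over Ω of x ↦ ⟨g_t, x⟩ + B_r(x, x_t). Then ‖x̂_t − x_{t+1}‖_Q ≤ ‖g_t − g̃_t‖_{Q⁻¹}. -/

import Mathlib

/-!
Each of the two points minimizes a linear term plus `B_r(·, x_t)` over the convex set `Ω`, so the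
first-order optimality condition yields the three-point inequality
`B_r(b, a) ≤ f(b) - f(a)` for the minimizer `a` of `f` and every `b ∈ Ω`. Lower-bounding `B_r` by
strong convexity and adding the two instances, the Bregman terms cancel and
`‖x̂ - x'‖_Q² ≤ ⟪g - g̃, x̂ - x'⟫ ≤ ‖g - g̃‖_{Q⁻¹} ‖x̂ - x'‖_Q`, the last step being Cauchy–Schwarz
for the inner product defined by `Q`.
-/

open scoped RealInnerProductSpace
open Finset

noncomputable def breg {n : ℕ} (ψ : EuclideanSpace ℝ (Fin n) → ℝ)
    (Dψ : EuclideanSpace ℝ (Fin n) → EuclideanSpace ℝ (Fin n))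
    (x y : EuclideanSpace ℝ (Fin n)) : ℝ :=
  ψ x - ψ y - ⟪Dψ y, x - y⟫

noncomputable def quadForm {n : ℕ} (Q : Matrix (Fin n) (Fin n) ℝ)
    (x : EuclideanSpace ℝ (Fin n)) : ℝ :=
  ∑ i, ∑ j, x i * Q i j * x j

open Matrix

theorem Matrix.PosDef.sq_dotProduct_le_inv_mul {ι : Type*} [Fintype ι] [DecidableEq ι]
    {Q : Matrix ι ι ℝ} (hQ : Q.PosDef) (u d : ι → ℝ) :
    (u ⬝ᵥ d) ^ 2 ≤ (u ⬝ᵥ (Q⁻¹ *ᵥ u)) * (d ⬝ᵥ (Q *ᵥ d)) := by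
  let := Q.toSeminormedAddCommGroup hQ.posSemidef
  let := Q.toInnerProductSpace hQ.posSemidef
  have hQw : Q *ᵥ (Q⁻¹ *ᵥ u) = u := by
    rw [mulVec_mulVec, mul_nonsing_inv _ (isUnit_iff_ne_zero.2 hQ.det_pos.ne'), one_mulVec]
  -- Cauchy–Schwarz for `⟪x, y⟫_Q = (Q *ᵥ y) ⬝ᵥ x`, applied to `d` and `Q⁻¹ *ᵥ u`
  have := real_inner_mul_inner_self_le d (Q⁻¹ *ᵥ u)
  change (Q *ᵥ _) ⬝ᵥ star d * ((Q *ᵥ _) ⬝ᵥ star d)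
    ≤ (Q *ᵥ d) ⬝ᵥ star d * ((Q *ᵥ _) ⬝ᵥ star _) at this
  simp only [star_trivial, hQw] at this
  rw [dotProduct_comm (Q *ᵥ d)] at this
  nlinarith

theorem quadForm_eq_dotProduct {n : ℕ} (Q : Matrix (Fin n) (Fin n) ℝ)
    (x : EuclideanSpace ℝ (Fin n)) :
    quadForm Q x = x.ofLp ⬝ᵥ (Q *ᵥ x.ofLp) := by
  simp [quadForm, dotProduct, mulVec, mul_sum, mul_assoc]

theorem quadForm_neg {n : ℕ} (Q : Matrix (Fin n) (Fin n) ℝ) (x : EuclideanSpace ℝ (Fin n)) :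
    quadForm Q (-x) = quadForm Q x := by
  simp [quadForm]

theorem quadForm_nonneg {n : ℕ} {Q : Matrix (Fin n) (Fin n) ℝ} (hQ : Q.PosSemidef)
    (x : EuclideanSpace ℝ (Fin n)) : 0 ≤ quadForm Q x := by
  simpa [quadForm_eq_dotProduct] using hQ.dotProduct_mulVec_nonneg x.ofLp

theorem inner_le_sqrt_quadForm_inv_mul_sqrt_quadForm {n : ℕ} {Q : Matrix (Fin n) (Fin n) ℝ}
    (hQ : Q.PosDef) (g d : EuclideanSpace ℝ (Fin n)) :
    ⟪g, d⟫ ≤ √(quadForm Q⁻¹ g) * √(quadForm Q d) := by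
  rw [← Real.sqrt_mul (quadForm_nonneg hQ.inv.posSemidef g)]
  refine (le_abs_self _).trans (Real.abs_le_sqrt ?_)
  simpa [quadForm_eq_dotProduct, EuclideanSpace.inner_eq_star_dotProduct, dotProduct_comm]
    using hQ.sq_dotProduct_le_inv_mul g.ofLp d.ofLp

theorem IsMinOn.inner_gradient_sub_nonneg {E : Type*} [NormedAddCommGroup E]
    [InnerProductSpace ℝ E] [CompleteSpace E] {f : E → ℝ} {Ω : Set E} {a b g : E}
    (hmin : IsMinOn f Ω a) (hf : HasGradientAt f g a) (hΩ : Convex ℝ Ω) (ha : a ∈ Ω)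
    (hb : b ∈ Ω) : 0 ≤ ⟪g, b - a⟫ := by
  simpa using hmin.localize.hasFDerivWithinAt_nonneg hf.hasFDerivAt.hasFDerivWithinAt
    (sub_mem_posTangentConeAt_of_segment_subset (hΩ.segment_subset ha hb))

section
variable {n : ℕ} {r : EuclideanSpace ℝ (Fin n) → ℝ}
  {Dr : EuclideanSpace ℝ (Fin n) → EuclideanSpace ℝ (Fin n)}

theorem hasGradientAt_inner_add_breg (c y : EuclideanSpace ℝ (Fin n))
    {a : EuclideanSpace ℝ (Fin n)} (hr : HasGradientAt r (Dr a) a) :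
    HasGradientAt (fun x => ⟪c, x⟫ + breg r Dr x y) (c + Dr a - Dr y) a := by
  rw [hasGradientAt_iff_hasFDerivAt, map_sub, map_add]
  have hlin : ∀ v : EuclideanSpace ℝ (Fin n),
      HasFDerivAt (fun x => ⟪v, x⟫) (InnerProductSpace.toDual ℝ _ v) a :=
    fun v => (InnerProductSpace.toDual ℝ _ v).hasFDerivAt
  have := ((hlin c).add hr.hasFDerivAt).sub ((hlin (Dr y)).add_const (r y - ⟪Dr y, y⟫))
  refine this.congr_of_eventuallyEq (.of_forall fun x => ?_)
  simp only [breg, inner_sub_right, Pi.add_apply, Pi.sub_apply]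
  ring

theorem breg_le_sub_of_isMinOn {Ω : Set (EuclideanSpace ℝ (Fin n))} (hΩ : Convex ℝ Ω)
    {c y a b : EuclideanSpace ℝ (Fin n)} (hr : HasGradientAt r (Dr a) a)
    (hmin : IsMinOn (fun x => ⟪c, x⟫ + breg r Dr x y) Ω a) (ha : a ∈ Ω) (hb : b ∈ Ω) :
    breg r Dr b a ≤ (⟪c, b⟫ + breg r Dr b y) - (⟪c, a⟫ + breg r Dr a y) := by
  have := hmin.inner_gradient_sub_nonneg (hasGradientAt_inner_add_breg c y hr) hΩ ha hb
  simp only [breg, inner_add_left, inner_sub_left, inner_sub_right] at this ⊢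
  linarith

end

theorem stmt_3_general {n : ℕ} (Ω : Set (EuclideanSpace ℝ (Fin n))) (hΩ : Convex ℝ Ω)
    (Q : Matrix (Fin n) (Fin n) ℝ) (hQ : Q.PosDef)
    (r : EuclideanSpace ℝ (Fin n) → ℝ)
    (Dr : EuclideanSpace ℝ (Fin n) → EuclideanSpace ℝ (Fin n))
    (hdiff : ∀ z, HasGradientAt r (Dr z) z)
    (hstrong : ∀ x ∈ Ω, ∀ y ∈ Ω, (1/2) * quadForm Q (x - y) ≤ breg r Dr x y)
    (xt xhat xnext gt gtilde : EuclideanSpace ℝ (Fin n))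
    (hxhat : xhat ∈ Ω) (hxnext : xnext ∈ Ω)
    (hhat : IsMinOn (fun x => ⟪gtilde, x⟫ + breg r Dr x xt) Ω xhat)
    (hnext : IsMinOn (fun x => ⟪gt, x⟫ + breg r Dr x xt) Ω xnext) :
    Real.sqrt (quadForm Q (xhat - xnext)) ≤ Real.sqrt (quadForm Q⁻¹ (gt - gtilde)) := by
  have h_hat := (hstrong _ hxnext _ hxhat).trans
    (breg_le_sub_of_isMinOn hΩ (hdiff xhat) hhat hxhat hxnext)
  have h_next := (hstrong _ hxhat _ hxnext).trans
    (breg_le_sub_of_isMinOn hΩ (hdiff xnext) hnext hxnext hxhat)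
  have h_le_inner : quadForm Q (xhat - xnext) ≤ ⟪gt - gtilde, xhat - xnext⟫ := by
    rw [← neg_sub, quadForm_neg] at h_hat
    simp only [inner_sub_left, inner_sub_right] at h_hat h_next ⊢
    linarith
  have h_cs := inner_le_sqrt_quadForm_inv_mul_sqrt_quadForm hQ (gt - gtilde) (xhat - xnext)
  have h_sq := Real.mul_self_sqrt (quadForm_nonneg hQ.posSemidef (xhat - xnext))
  nlinarith [Real.sqrt_nonneg (quadForm Q (xhat - xnext)),
    Real.sqrt_nonneg (quadForm Q⁻¹ (gt - gtilde))]

theorem stmt_3 {n : ℕ} (Ω : Set (EuclideanSpace ℝ (Fin n))) (hΩ : Convex ℝ Ω)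
    (Q : Matrix (Fin n) (Fin n) ℝ) (hQ : Q.PosDef)
    (r : EuclideanSpace ℝ (Fin n) → ℝ)
    (Dr : EuclideanSpace ℝ (Fin n) → EuclideanSpace ℝ (Fin n))
    (hdiff : ∀ z, HasGradientAt r (Dr z) z)
    (hstrong : ∀ x ∈ Ω, ∀ y ∈ Ω, (1/2) * quadForm Q (x - y) ≤ breg r Dr x y)
    (xt xhat xnext gt gtilde : EuclideanSpace ℝ (Fin n))
    (hxt : xt ∈ Ω) (hxhat : xhat ∈ Ω) (hxnext : xnext ∈ Ω)
    (hhat : IsMinOn (fun x => ⟪gtilde, x⟫ + breg r Dr x xt) Ω xhat)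
    (hnext : IsMinOn (fun x => ⟪gt, x⟫ + breg r Dr x xt) Ω xnext) :
    Real.sqrt (quadForm Q (xhat - xnext)) ≤ Real.sqrt (quadForm Q⁻¹ (gt - gtilde)) :=
  stmt_3_general Ω hΩ Q hQ r Dr hdiff hstrong xt xhat xnext gt gtilde hxhat hxnext hhat hnext
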